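/- In the linear-valuation market, for any two feasible price vectors p ≤ q, the maximum revenue attainable by a feasible outcome at prices p is at least the maximum revenue attainable at prices q. Consequently, the elementwise-minimal feasible prices p* maximize the seller's revenue over all feasible outcomes. -/
import Mathlib


open Finset

variable {n m : ℕ}

def dotp {n : ℕ} (p x : Fin n → ℝ) : ℝ := ∑ j, p j * x j

def Demand {n : ℕ} (v : Fin n → ℝ) (β : ℝ) (p : Fin n → ℝ) : Set (Fin n → ℝ) :=
  {x | (∀ j, 0 ≤ x j) ∧ dotp p x ≤ β ∧
    ∀ y : Fin n → ℝ, (∀ j, 0 ≤ y j) → dotp p y ≤ β →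
      dotp v y - dotp p y ≤ dotp v x - dotp p x}

/-- An allocation extending prices `p` to a feasible outcome. -/
def Alloc (s : Fin n → ℝ) (v : Fin m → Fin n → ℝ) (β : Fin m → ℝ)
    (p : Fin n → ℝ) (x : Fin m → Fin n → ℝ) : Prop :=
  (∀ i, x i ∈ Demand (v i) (β i) p) ∧ ∀ j, ∑ i, x i j ≤ s j

def FeasiblePrices (s : Fin n → ℝ) (v : Fin m → Fin n → ℝ) (β : Fin m → ℝ)
    (p : Fin n → ℝ) : Prop :=
  (∀ j, 0 < p j) ∧ ∃ x : Fin m → Fin n → ℝ, Alloc s v β p x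

lemma util_core {n : ℕ} {w t : Fin n → ℝ} {R : ℝ}
    (hR : ∀ j, w j ≤ R * t j)
    {x : Fin n → ℝ} (hx : ∀ j, 0 ≤ x j) :
    dotp w x - dotp t x ≤ (R - 1) * dotp t x := by
  have h : dotp w x - dotp t x = ∑ j, (w j - t j) * x j := by
    rw [dotp, dotp, ← Finset.sum_sub_distrib]
    exact Finset.sum_congr rfl fun j _ => by ring
  have h2 : (R - 1) * dotp t x = ∑ j, ((R - 1) * t j) * x j := by
    rw [dotp, Finset.mul_sum]
    exact Finset.sum_congr rfl fun j _ => by ring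
  rw [h, h2]
  refine Finset.sum_le_sum fun j _ => ?_
  exact mul_le_mul_of_nonneg_right (by linarith [hR j]) (hx j)

lemma util_le {n : ℕ} {w t : Fin n → ℝ} {b R : ℝ}
    (hR : ∀ j, w j ≤ R * t j) (hR1 : 1 ≤ R)
    {x : Fin n → ℝ} (hx : ∀ j, 0 ≤ x j) (hbx : dotp t x ≤ b) :
    dotp w x - dotp t x ≤ (R - 1) * b := by
  have := util_core hR hx
  nlinarith

lemma util_eq {n : ℕ} {w t : Fin n → ℝ} {b R : ℝ}
    (hR : ∀ j, w j ≤ R * t j) (hR1 : 1 < R)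
    {x : Fin n → ℝ} (hx : ∀ j, 0 ≤ x j) (hbx : dotp t x ≤ b)
    (heq : (R - 1) * b ≤ dotp w x - dotp t x) :
    dotp t x = b ∧ ∀ j, 0 < x j → w j = R * t j := by
  have hcore := util_core hR (x := x) hx
  have hT : dotp t x = b := by nlinarith
  have hWcalc : ∑ j, (R * t j - w j) * x j = R * dotp t x - dotp w x := by
    rw [dotp, dotp, Finset.mul_sum, ← Finset.sum_sub_distrib]
    exact Finset.sum_congr rfl fun j _ => by ring
  have hsum0 : ∑ j, (R * t j - w j) * x j = 0 := by
    rw [hWcalc]; nlinarith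
  have hnn : ∀ j ∈ Finset.univ, 0 ≤ (R * t j - w j) * x j := fun j _ =>
    mul_nonneg (by linarith [hR j]) (hx j)
  refine ⟨hT, fun j hj => ?_⟩
  have := (Finset.sum_eq_zero_iff_of_nonneg hnn).mp hsum0 j (Finset.mem_univ j)
  rcases mul_eq_zero.mp this with h | h
  · linarith
  · exact absurd h hj.ne'

lemma dotp_congr_support {n : ℕ} {p q y : Fin n → ℝ}
    (hy : ∀ j, 0 ≤ y j) (hsupp : ∀ j, 0 < y j → p j = q j) :
    dotp p y = dotp q y := by
  refine Finset.sum_congr rfl fun j _ => ?_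
  rcases eq_or_lt_of_le (hy j) with h | h
  · rw [← h, mul_zero, mul_zero]
  · rw [hsupp j h]

lemma agent_key {n : ℕ} (v : Fin n → ℝ) (b : ℝ) (hb : 0 < b)
    (p q : Fin n → ℝ) (hp : ∀ j, 0 < p j) (hq : ∀ j, 0 < q j) (hpq : p ≤ q)
    (x0 y : Fin n → ℝ) (hx0 : x0 ∈ Demand v b p) (hy : y ∈ Demand v b q) :
    ∃ x, x ∈ Demand v b p ∧ dotp q y ≤ dotp p x ∧
      ((x = y ∧ ∀ j, p j < q j → y j = 0) ∨ (x = x0 ∧ ∀ j, p j = q j → x0 j = 0)) := by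
  obtain ⟨hy0, hyb, hyopt⟩ := hy
  obtain ⟨hx00, hx0b, hx0opt⟩ := hx0
  by_cases hA : ∃ j, p j < v j
  · -- buyer has a strictly profitable good at p
    obtain ⟨j1, hj1⟩ := hA
    obtain ⟨j0, -, hj0⟩ := Finset.exists_max_image Finset.univ (fun j => v j / p j)
      ⟨j1, Finset.mem_univ j1⟩
    set R := v j0 / p j0 with hRdef
    have hj0' : ∀ j, v j / p j ≤ R := fun j => hj0 j (Finset.mem_univ j)
    have hR1 : 1 < R := lt_of_lt_of_le ((one_lt_div (hp j1)).mpr hj1) (hj0' j1)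
    have hRub : ∀ j, v j ≤ R * p j := fun j => by
      have := (div_le_iff₀ (hp j)).mp (hj0' j); linarith
    have hRubq : ∀ j, v j ≤ R * q j := fun j =>
      (hRub j).trans (mul_le_mul_of_nonneg_left (hpq j) (by linarith))
    by_cases hA1 : ∃ j, p j = q j ∧ ∀ k, v k / p k ≤ v j / p j
    · -- some ratio-maximal good has p j = q j : reuse y
      obtain ⟨j2, hj2eq, hj2max⟩ := hA1
      have hR2 : v j2 / p j2 = R := le_antisymm (hj0' j2) (hj2max j0)
      have hvj2 : v j2 = R * p j2 := by
        rw [← hR2]; exact (div_mul_cancel₀ _ (hp j2).ne').symm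
      -- test bundle at q on good j2
      set e : Fin n → ℝ := fun k => if k = j2 then b / q j2 else 0 with hedef
      have he0 : ∀ j, 0 ≤ e j := fun j => by
        simp only [hedef]; split
        · exact div_nonneg hb.le (hq j2).le
        · exact le_rfl
      have heq : dotp q e = b := by
        rw [dotp]
        rw [Finset.sum_eq_single j2]
        · simp only [hedef, if_pos rfl]
          rw [mul_div_assoc']
          exact mul_div_cancel_left₀ b (hq j2).ne'
        · intro k _ hk; simp [hedef, hk]
        · intro h; exact absurd (Finset.mem_univ j2) h
      have hev : dotp v e = R * b := by
        rw [dotp]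
        rw [Finset.sum_eq_single j2]
        · simp only [hedef, if_pos rfl]
          rw [hvj2, hj2eq, mul_div_assoc', mul_assoc, mul_div_assoc,
            mul_div_cancel_left₀ b (hq j2).ne']
        · intro k _ hk; simp [hedef, hk]
        · intro h; exact absurd (Finset.mem_univ j2) h
      have hylb : (R - 1) * b ≤ dotp v y - dotp q y := by
        have := hyopt e he0 (le_of_eq heq)
        rw [hev, heq] at this; linarith
      obtain ⟨hqyb, hsuppR⟩ := util_eq hRubq hR1 hy0 hyb hylb
      have hsupp : ∀ j, 0 < y j → p j = q j := by
        intro j hj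
        have h1 := hsuppR j hj
        have h2 := hRub j
        have h3 : R * q j ≤ R * p j := by linarith
        have : q j ≤ p j := le_of_mul_le_mul_left h3 (by linarith)
        exact le_antisymm (hpq j) this
      have hpyqy : dotp p y = dotp q y := dotp_congr_support hy0 hsupp
      refine ⟨y, ⟨hy0, by rw [hpyqy]; exact hyb, ?_⟩, le_of_eq hpyqy.symm, Or.inl ⟨rfl, ?_⟩⟩
      · intro z hz hzb
        have h1 : dotp v z - dotp p z ≤ (R - 1) * b := util_le hRub hR1.le hz hzb
        have h2 : (R - 1) * b ≤ dotp v y - dotp p y := by rw [hpyqy]; exact hylb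
        linarith
      · intro j hj
        by_contra h
        have : 0 < y j := lt_of_le_of_ne (hy0 j) (Ne.symm h)
        exact absurd (hsupp j this) hj.ne
    · -- all ratio-maximal goods have p j < q j : reuse x0
      -- test bundle at p on good j0
      set e : Fin n → ℝ := fun k => if k = j0 then b / p j0 else 0 with hedef
      have he0 : ∀ j, 0 ≤ e j := fun j => by
        simp only [hedef]; split
        · exact div_nonneg hb.le (hp j0).le
        · exact le_rfl
      have heq : dotp p e = b := by
        rw [dotp, Finset.sum_eq_single j0]
        · simp only [hedef, if_pos rfl]
          rw [mul_div_assoc']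
          exact mul_div_cancel_left₀ b (hp j0).ne'
        · intro k _ hk; simp [hedef, hk]
        · intro h; exact absurd (Finset.mem_univ j0) h
      have hvj0 : v j0 = R * p j0 := by
        rw [hRdef]; exact (div_mul_cancel₀ _ (hp j0).ne').symm
      have hev : dotp v e = R * b := by
        rw [dotp, Finset.sum_eq_single j0]
        · simp only [hedef, if_pos rfl]
          rw [hvj0, mul_div_assoc', mul_assoc, mul_div_assoc,
            mul_div_cancel_left₀ b (hp j0).ne']
        · intro k _ hk; simp [hedef, hk]
        · intro h; exact absurd (Finset.mem_univ j0) h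
      have hx0lb : (R - 1) * b ≤ dotp v x0 - dotp p x0 := by
        have := hx0opt e he0 (le_of_eq heq)
        rw [hev, heq] at this; linarith
      obtain ⟨hpx0b, hsuppR⟩ := util_eq hRub hR1 hx00 hx0b hx0lb
      refine ⟨x0, ⟨hx00, hx0b, hx0opt⟩, by rw [hpx0b]; exact hyb, Or.inr ⟨rfl, ?_⟩⟩
      intro j hjeq
      by_contra h
      have hjpos : 0 < x0 j := lt_of_le_of_ne (hx00 j) (Ne.symm h)
      have hvj : v j = R * p j := hsuppR j hjpos
      refine hA1 ⟨j, hjeq, fun k => ?_⟩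
      have : v j / p j = R := by rw [hvj]; exact mul_div_cancel_right₀ R (hp j).ne'
      rw [this]; exact hj0' k
  · -- all values at most p : reuse y
    push_neg at hA
    have hzero0 : ∀ j, (0:ℝ) ≤ (fun _ : Fin n => (0:ℝ)) j := fun j => le_rfl
    have hutil0 : 0 ≤ dotp v y - dotp q y := by
      have := hyopt (fun _ => 0) hzero0 (by simp [dotp]; linarith)
      simpa [dotp] using this
    have hterm : ∑ j, (q j - v j) * y j ≤ 0 := by
      have h : ∑ j, (q j - v j) * y j = dotp q y - dotp v y := by
        rw [dotp, dotp, ← Finset.sum_sub_distrib]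
        exact Finset.sum_congr rfl fun j _ => by ring
      rw [h]; linarith
    have hnn : ∀ j ∈ Finset.univ, (0:ℝ) ≤ (q j - v j) * y j := fun j _ =>
      mul_nonneg (by linarith [hA j, hpq j]) (hy0 j)
    have hsum0 : ∑ j, (q j - v j) * y j = 0 :=
      le_antisymm hterm (Finset.sum_nonneg hnn)
    have hsupp : ∀ j, 0 < y j → p j = q j := by
      intro j hj
      have := (Finset.sum_eq_zero_iff_of_nonneg hnn).mp hsum0 j (Finset.mem_univ j)
      rcases mul_eq_zero.mp this with h | h
      · have : q j = v j := by linarith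
        have h2 := hA j
        exact le_antisymm (hpq j) (by linarith)
      · exact absurd h hj.ne'
    have hpyqy : dotp p y = dotp q y := dotp_congr_support hy0 hsupp
    refine ⟨y, ⟨hy0, by rw [hpyqy]; exact hyb, ?_⟩, le_of_eq hpyqy.symm, Or.inl ⟨rfl, ?_⟩⟩
    · intro z hz hzb
      have h1 : dotp v z - dotp p z ≤ 0 := by
        have h : dotp v z - dotp p z = ∑ j, (v j - p j) * z j := by
          rw [dotp, dotp, ← Finset.sum_sub_distrib]
          exact Finset.sum_congr rfl fun j _ => by ring
        rw [h]
        exact Finset.sum_nonpos fun j _ =>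
          mul_nonpos_of_nonpos_of_nonneg (by linarith [hA j]) (hz j)
      have h2 : 0 ≤ dotp v y - dotp p y := by rw [hpyqy]; exact hutil0
      linarith
    · intro j hj
      by_contra h
      have : 0 < y j := lt_of_le_of_ne (hy0 j) (Ne.symm h)
      exact absurd (hsupp j this) hj.ne

def Revenue (p : Fin n → ℝ) (x : Fin m → Fin n → ℝ) : ℝ := ∑ i, dotp p (x i)


lemma revenue_key {n m : ℕ} (s : Fin n → ℝ) (v : Fin m → Fin n → ℝ) (β : Fin m → ℝ)
    (hβ : ∀ i, 0 < β i) (p q : Fin n → ℝ)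
    (hp : FeasiblePrices s v β p) (hq : FeasiblePrices s v β q) (hpq : p ≤ q)
    (y : Fin m → Fin n → ℝ) (hy : Alloc s v β q y) :
    ∃ x : Fin m → Fin n → ℝ, Alloc s v β p x ∧ Revenue q y ≤ Revenue p x := by
  obtain ⟨hp0, x0, hx0⟩ := hp
  obtain ⟨hq0, -⟩ := hq
  have hag : ∀ i, ∃ x, x ∈ Demand (v i) (β i) p ∧ dotp q (y i) ≤ dotp p x ∧
      ((x = y i ∧ ∀ j, p j < q j → y i j = 0) ∨
        (x = x0 i ∧ ∀ j, p j = q j → x0 i j = 0)) :=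
    fun i => agent_key (v i) (β i) (hβ i) p q hp0 hq0 hpq (x0 i) (y i) (hx0.1 i) (hy.1 i)
  choose X hXd hXr hXc using hag
  refine ⟨X, ⟨hXd, fun j => ?_⟩, Finset.sum_le_sum fun i _ => hXr i⟩
  by_cases hjeq : p j = q j
  · calc ∑ i, X i j ≤ ∑ i, y i j := by
          refine Finset.sum_le_sum fun i _ => ?_
          rcases hXc i with ⟨hxe, -⟩ | ⟨hxe, h0⟩
          · rw [hxe]
          · rw [hxe, h0 j hjeq]; exact (hy.1 i).1 j
      _ ≤ s j := hy.2 j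
  · have hjlt : p j < q j := lt_of_le_of_ne (hpq j) hjeq
    calc ∑ i, X i j ≤ ∑ i, x0 i j := by
          refine Finset.sum_le_sum fun i _ => ?_
          rcases hXc i with ⟨hxe, h0⟩ | ⟨hxe, -⟩
          · rw [hxe, h0 j hjlt]; exact (hx0.1 i).1 j
          · rw [hxe]
      _ ≤ s j := hx0.2 j

/-- For feasible prices `p ≤ q`, the maximum revenue at `p` is at least the
maximum revenue at `q`; consequently the elementwise-minimal feasible prices
maximise revenue over all feasible outcomes. -/
theorem minimal_prices_maximise_revenue
    (s : Fin n → ℝ) (v : Fin m → Fin n → ℝ) (β : Fin m → ℝ)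
    (hv : ∀ i j, 0 ≤ v i j) (hgood : ∀ j, ∃ i, 0 < v i j)
    (hβ : ∀ i, 0 < β i) (hs : ∀ j, 0 ≤ s j)
    (pstar : Fin n → ℝ) (hps : FeasiblePrices s v β pstar)
    (hmin : ∀ q : Fin n → ℝ, FeasiblePrices s v β q → pstar ≤ q) :
    (∀ p q : Fin n → ℝ, FeasiblePrices s v β p → FeasiblePrices s v β q →
      p ≤ q → ∀ y : Fin m → Fin n → ℝ, Alloc s v β q y →
        ∃ x : Fin m → Fin n → ℝ, Alloc s v β p x ∧ Revenue q y ≤ Revenue p x) ∧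
    (∀ (q : Fin n → ℝ) (y : Fin m → Fin n → ℝ), FeasiblePrices s v β q →
      Alloc s v β q y →
        ∃ x : Fin m → Fin n → ℝ,
          Alloc s v β pstar x ∧ Revenue q y ≤ Revenue pstar x) := by
  have key : ∀ p q : Fin n → ℝ, FeasiblePrices s v β p → FeasiblePrices s v β q →
      p ≤ q → ∀ y : Fin m → Fin n → ℝ, Alloc s v β q y →
        ∃ x : Fin m → Fin n → ℝ, Alloc s v β p x ∧ Revenue q y ≤ Revenue p x :=
    fun p q hp hq hpq y hy => revenue_key s v β hβ p q hp hq hpq y hy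
  exact ⟨key, fun q y hq hy => key pstar q hps hq (hmin q hq) y hy⟩
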